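/- arXiv:hep-ph/9804333 — 2 statements merged into one kernel-verified Lean document; each statement's English description precedes it below -/
import Mathlib

section
/- For n ≥ 2 distinct linear propagators P_{l,i} = α_i + β_i l + iη with β_i ≠ 0 and η > 0, one has (1/(2πi)) ∫_{-∞}^{∞} dl ∏_{i=1}^{n} 1/P_{l,i} = Σ_{i=1}^{n-1} (θ(-β_i) - θ(-β_n)) / (β_i ∏_{j≠i} P_{l,j}(l^{(i)})), where l^{(i)} = -(α_i + iη)/β_i and θ is the Heaviside function. -/
open Complex MeasureTheory Real Finset

noncomputable def heaviside (x : ℝ) : ℝ := if 0 < x then 1 else 0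

/-!
Write each propagator as `βᵢ (l - zᵢ)` with `zᵢ = l⁽ⁱ⁾`. Partial fractions give
`∏ᵢ (l - zᵢ)⁻¹ = ∑ᵢ wᵢ (l - zᵢ)⁻¹` with the Lagrange nodal weights `wᵢ = ∏_{j≠i} (zᵢ - zⱼ)⁻¹`,
and `∑ᵢ wᵢ = 0` (it is the coefficient of `X ^ n` of the interpolant of `1`), so the integrand
is a combination of the integrable differences `(l - zᵢ)⁻¹ - (l - zₙ)⁻¹`. Since `Im zᵢ ≠ 0`,
`log (l - zᵢ) - log (l - zₙ)` is an antiderivative on all of `ℝ`; it tends to `0` at `+∞`,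
while at `-∞` the argument of `l - zᵢ` tends to `-π` or `π` according as `Im zᵢ` is positive or
negative, so the integral is `2πi (θ(Im zᵢ) - θ(Im zₙ))`. Finally `Im zᵢ = -η / βᵢ` has the sign of `-βᵢ`.
-/

open Filter Topology

theorem heaviside_div_of_pos {c : ℝ} (hc : 0 < c) (x : ℝ) : heaviside (c / x) = heaviside x := by
  simp only [heaviside, div_pos_iff_of_pos_left hc]

namespace Lagrange

variable {F ι : Type*} [Field F] [DecidableEq ι] {s : Finset ι} {v : ι → F}

theorem inv_prod_sub_eq_sum_nodalWeight_mul_inv_sub (hvs : Set.InjOn v s) (hs : s.Nonempty)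
    {x : F} (hx : ∀ i ∈ s, x ≠ v i) :
    (∏ i ∈ s, (x - v i))⁻¹ = ∑ i ∈ s, nodalWeight s v i * (x - v i)⁻¹ := by
  have h := eval_interpolate_not_at_node (1 : ι → F) hx
  simp only [interpolate_one hvs hs, Polynomial.eval_one, eval_nodal, Pi.one_apply,
    mul_one] at h
  exact (eq_inv_of_mul_eq_one_right h.symm).symm

theorem sum_nodalWeight_eq_zero (hvs : Set.InjOn v s) (hs : 2 ≤ #s) :
    ∑ i ∈ s, nodalWeight s v i = 0 := by
  have h := coeff_eq_sum hvs (P := 1) (by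
    rw [Polynomial.degree_one]; exact_mod_cast (by omega : 0 < #s))
  rw [Polynomial.coeff_one, if_neg (by omega)] at h
  simpa [nodalWeight, prod_inv_distrib] using h.symm

theorem mul_prod_erase_mul_sub_eq_prod_mul_inv_nodalWeight (b : ι → F) {i : ι} (hi : i ∈ s) :
    b i * ∏ j ∈ s.erase i, b j * (v i - v j) = (∏ j ∈ s, b j) * (nodalWeight s v i)⁻¹ := by
  rw [nodalWeight, prod_inv_distrib, inv_inv, prod_mul_distrib, ← mul_assoc, mul_prod_erase _ _ hi]

theorem inv_prod_sub_eq_sum_nodalWeight_mul_inv_sub_sub_inv_sub_last {n : ℕ} (hn : 1 ≤ n)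
    {v : Fin (n + 1) → F} (hv : Function.Injective v) {x : F} (hx : ∀ i, x ≠ v i) :
    (∏ i, (x - v i))⁻¹ = ∑ i : Fin n, nodalWeight univ v i.castSucc *
      ((x - v i.castSucc)⁻¹ - (x - v (Fin.last n))⁻¹) := by
  have hsum := sum_nodalWeight_eq_zero hv.injOn (s := univ) (by simp; omega)
  rw [Fin.sum_univ_castSucc] at hsum
  rw [inv_prod_sub_eq_sum_nodalWeight_mul_inv_sub hv.injOn univ_nonempty (fun i _ => hx i),
    Fin.sum_univ_castSucc, eq_neg_of_add_eq_zero_right hsum]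
  simp only [mul_sub, sum_sub_distrib, ← sum_mul]
  ring

end Lagrange

theorem tendsto_log_ofReal_sub_sub_log_atTop (z : ℂ) :
    Tendsto (fun x : ℝ => log (x - z) - Real.log x) atTop (𝓝 0) := by
  have hlim : Tendsto (fun x : ℝ => 1 - z * (x : ℂ)⁻¹) atTop (𝓝 1) := by
    simpa using tendsto_const_nhds.sub
      (tendsto_const_nhds.mul ((continuous_ofReal.tendsto 0).comp tendsto_inv_atTop_zero))
  have h := (continuousAt_clog (by simp : (1 : ℂ) ∈ slitPlane)).tendsto.comp hlim
  rw [Complex.log_one] at h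
  refine h.congr' ?_
  filter_upwards [eventually_gt_atTop 0, eventually_gt_atTop z.re] with x hx hxz
  have hsplit : (x : ℂ) - z = x * (1 - z * (x : ℂ)⁻¹) := by
    have : (x : ℂ) ≠ 0 := ofReal_ne_zero.mpr hx.ne'
    field_simp
  have hne : (x : ℂ) - z ≠ 0 := fun h => by
    have := congrArg re h
    simp only [sub_re, ofReal_re, zero_re] at this
    linarith
  rw [Function.comp_apply, hsplit, log_ofReal_mul hx (right_ne_zero_of_mul (hsplit ▸ hne)),
    add_sub_cancel_left]

theorem tendsto_log_ofReal_sub_sub_log_neg_atBot {z : ℂ} (hz : z.im ≠ 0) :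
    Tendsto (fun x : ℝ => log (x - z) - Real.log (-x)) atBot
      (𝓝 (π * I * (1 - 2 * heaviside z.im))) := by
  have hlim : Tendsto (fun x : ℝ => -1 + z * (x : ℂ)⁻¹) atBot (𝓝 (-1)) := by
    simpa using tendsto_const_nhds.add
      (tendsto_const_nhds.mul ((continuous_ofReal.tendsto 0).comp tendsto_inv_atBot_zero))
  have him : ∀ x : ℝ, (-1 + z * (x : ℂ)⁻¹).im = z.im * x⁻¹ := fun x => by simp
  have hlog : Tendsto (fun x : ℝ => log (-1 + z * (x : ℂ)⁻¹)) atBot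
      (𝓝 (π * I * (1 - 2 * heaviside z.im))) := by
    rcases hz.lt_or_gt with hneg | hpos
    · rw [show heaviside z.im = 0 from if_neg hneg.not_gt,
        show (π : ℂ) * I * (1 - 2 * ((0 : ℝ) : ℂ)) = Real.log ‖(-1 : ℂ)‖ + π * I by simp]
      refine (tendsto_log_nhdsWithin_im_nonneg_of_re_neg_of_im_zero (by simp) (by simp)).comp
        (tendsto_nhdsWithin_iff.mpr ⟨hlim, ?_⟩)
      filter_upwards [eventually_lt_atBot 0] with x hx
      simpa [him] using (mul_pos_of_neg_of_neg hneg (inv_lt_zero.mpr hx)).le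
    · rw [show heaviside z.im = 1 from if_pos hpos,
        show (π : ℂ) * I * (1 - 2 * ((1 : ℝ) : ℂ)) = Real.log ‖(-1 : ℂ)‖ - π * I by simp; ring]
      refine (tendsto_log_nhdsWithin_im_neg_of_re_neg_of_im_zero (by simp) (by simp)).comp
        (tendsto_nhdsWithin_iff.mpr ⟨hlim, ?_⟩)
      filter_upwards [eventually_lt_atBot 0] with x hx
      simpa [him] using mul_neg_of_pos_of_neg hpos (inv_lt_zero.mpr hx)
  refine hlog.congr' ?_
  filter_upwards [eventually_lt_atBot 0] with x hx
  have hsplit : (x : ℂ) - z = ((-x : ℝ) : ℂ) * (-1 + z * (x : ℂ)⁻¹) := by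
    have : (x : ℂ) ≠ 0 := ofReal_ne_zero.mpr hx.ne
    push_cast
    field_simp
    ring
  have hne : (x : ℂ) - z ≠ 0 := fun h => hz (by simpa using congrArg im h)
  rw [hsplit, log_ofReal_mul (neg_pos.mpr hx) (right_ne_zero_of_mul (hsplit ▸ hne)),
    add_sub_cancel_left]

theorem hasDerivAt_log_ofReal_sub {z : ℂ} (hz : z.im ≠ 0) (x : ℝ) :
    HasDerivAt (fun t : ℝ => log (t - z)) ((x - z)⁻¹) x := by
  simpa using ((hasDerivAt_id x).ofReal_comp.sub_const z).clog_real
    (mem_slitPlane_iff.mpr (Or.inr (by simpa using hz)))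

theorem integrable_inv_normSq_ofReal_sub {z : ℂ} (hz : z.im ≠ 0) :
    Integrable fun x : ℝ => (normSq (x - z))⁻¹ := by
  refine (((integrable_inv_one_add_sq.comp_div hz).comp_sub_right z.re).const_mul
    (z.im ^ 2)⁻¹).congr (ae_of_all _ fun x => ?_)
  simp only [normSq_apply, sub_re, ofReal_re, sub_im, ofReal_im, zero_sub]
  field_simp
  ring

theorem integrable_inv_ofReal_sub_sub_inv_ofReal_sub {z w : ℂ} (hz : z.im ≠ 0)
    (hw : w.im ≠ 0) : Integrable fun x : ℝ => (x - z)⁻¹ - (x - w)⁻¹ := by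
  have hne : ∀ {u : ℂ}, u.im ≠ 0 → ∀ x : ℝ, (x : ℂ) - u ≠ 0 := fun hu x h =>
    hu (by simpa using congrArg im h)
  have hcont : ∀ {u : ℂ}, u.im ≠ 0 → Continuous fun x : ℝ => ((x : ℂ) - u)⁻¹ := fun hu =>
    (continuous_ofReal.sub continuous_const).inv₀ (hne hu)
  refine (((integrable_inv_normSq_ofReal_sub hz).add
    (integrable_inv_normSq_ofReal_sub hw)).const_mul ‖z - w‖).mono'
    ((hcont hz).sub (hcont hw)).aestronglyMeasurable (ae_of_all _ fun x => ?_)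
  have hdiff : ((x : ℂ) - z)⁻¹ - ((x : ℂ) - w)⁻¹ = (z - w) * ((x - z)⁻¹ * (x - w)⁻¹) := by
    field_simp [hne hz x, hne hw x]
    ring
  rw [hdiff, norm_mul, norm_mul, Pi.add_apply, ← normSq_inv, ← normSq_inv,
    normSq_eq_norm_sq, normSq_eq_norm_sq]
  gcongr
  nlinarith [sq_nonneg (‖((x : ℂ) - z)⁻¹‖ - ‖((x : ℂ) - w)⁻¹‖)]

theorem integral_inv_ofReal_sub_sub_inv_ofReal_sub {z w : ℂ} (hz : z.im ≠ 0) (hw : w.im ≠ 0) :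
    ∫ x : ℝ, ((x - z)⁻¹ - (x - w)⁻¹) = 2 * π * I * (heaviside z.im - heaviside w.im) := by
  have hbot := (tendsto_log_ofReal_sub_sub_log_neg_atBot hz).sub
    (tendsto_log_ofReal_sub_sub_log_neg_atBot hw)
  have htop := (tendsto_log_ofReal_sub_sub_log_atTop z).sub
    (tendsto_log_ofReal_sub_sub_log_atTop w)
  simp only [sub_sub_sub_cancel_right, sub_zero] at hbot htop
  rw [integral_of_hasDerivAt_of_tendsto
    (fun x => (hasDerivAt_log_ofReal_sub hz x).sub (hasDerivAt_log_ofReal_sub hw x))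
    (integrable_inv_ofReal_sub_sub_inv_ofReal_sub hz hw) hbot htop]
  ring

open Lagrange in
theorem integral_inv_prod_mul_ofReal_sub {n : ℕ} (hn : 1 ≤ n) (b z : Fin (n + 1) → ℂ)
    (hz : Function.Injective z) (him : ∀ i, (z i).im ≠ 0) :
    (2 * π * I)⁻¹ * ∫ l : ℝ, (∏ i, b i * (l - z i))⁻¹ =
      ∑ i : Fin n, ((heaviside (z i.castSucc).im : ℂ) - heaviside (z (Fin.last n)).im) /
        (b i.castSucc * ∏ j ∈ univ.erase i.castSucc, b j * (z i.castSucc - z j)) := by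
  have hpartial : ∀ l : ℝ, (∏ i, b i * (l - z i))⁻¹ = (∏ i, b i)⁻¹ *
      ∑ i : Fin n, nodalWeight univ z i.castSucc *
        ((l - z i.castSucc)⁻¹ - (l - z (Fin.last n))⁻¹) := fun l => by
    rw [prod_mul_distrib, mul_inv,
      inv_prod_sub_eq_sum_nodalWeight_mul_inv_sub_sub_inv_sub_last hn hz
        fun i h => him i (by simp [← h])]
  simp_rw [hpartial]
  rw [integral_const_mul, integral_finsetSum _ fun i _ =>
    (integrable_inv_ofReal_sub_sub_inv_ofReal_sub (him _) (him _)).const_mul _, mul_sum, mul_sum]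
  refine sum_congr rfl fun i _ => ?_
  rw [integral_const_mul, integral_inv_ofReal_sub_sub_inv_ofReal_sub (him _) (him _),
    mul_prod_erase_mul_sub_eq_prod_mul_inv_nodalWeight b (mem_univ _), div_eq_mul_inv,
    mul_inv (∏ j, b j), inv_inv]
  field_simp

/-- Residue-theorem evaluation of the integral of a product of `n + 1 ≥ 2`
distinct inverse linear propagators `P_{l,i} = αᵢ + βᵢ l + iη`, with the
residue at the last pole eliminated using that the sum of all residues
vanishes:
`(1/(2πi)) ∫ dl ∏ᵢ 1/P_{l,i} = ∑_{i<n} (θ(-βᵢ) - θ(-βₙ)) / (βᵢ ∏_{j≠i} P_{l,j}(l⁽ⁱ⁾))`. -/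
theorem multi_propagator_residue_formula
    (n : ℕ) (hn : 1 ≤ n) (α β : Fin (n + 1) → ℝ)
    (hβ : ∀ i, β i ≠ 0) (η : ℝ) (hη : 0 < η)
    (hdist : Function.Injective fun i : Fin (n + 1) =>
      -(((α i : ℂ) + η * I)) / (β i)) :
    (2 * Real.pi * I)⁻¹ *
      ∫ l : ℝ, (∏ i, ((α i : ℂ) + β i * l + η * I))⁻¹
    = ∑ i : Fin n,
        ((heaviside (-β i.castSucc) : ℝ) - (heaviside (-β (Fin.last n)) : ℝ)) /
          ((β i.castSucc : ℂ) *
            ∏ j ∈ Finset.univ.erase i.castSucc,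
              ((α j : ℂ) +
                β j * (-(((α i.castSucc : ℂ) + η * I)) / (β i.castSucc)) +
                η * I)) := by
  set z : Fin (n + 1) → ℂ := fun i => -((α i : ℂ) + η * I) / β i
  have hfactor : ∀ j (u : ℂ), (α j : ℂ) + β j * u + η * I = β j * (u - z j) := fun j u => by
    have : (β j : ℂ) ≠ 0 := ofReal_ne_zero.mpr (hβ j)
    simp only [z]
    field_simp
    ring
  have him : ∀ i, (z i).im = η / -β i := fun i => by
    simp [z, div_neg, neg_div]
  simp_rw [hfactor, integral_inv_prod_mul_ofReal_sub hn _ z hdist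
    fun i => by simpa [him] using ⟨hη.ne', hβ i⟩, him, heaviside_div_of_pos hη]
  rfl
end

section
/- Let f(x, y, z) be a product of inverse propagators of the form 1/((x + a + iη)(y + b + iη)(z + c + iη)·…) with η > 0 and real constants a, b, c,…, decaying sufficiently fast. Then ∫_{-∞}^{∞} ∫_{-∞}^{∞} f(l₃², (l₃+k₃)², k₃²) dl₃ dk₃ = -∫_{-∞}^{∞} ∫_{-∞}^{∞} f(-l₃², -(l₃+k₃)², -k₃²) dl₃ dk₃ (the orthogonal-space metric flip). -/
/-!
Add the two integrands and pass to polar coordinates `(l₃, k₃) = r (cos θ, sin θ)`. For fixed `θ`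
both terms are values of the single function
`Φ_θ(t) = f(t cos² θ, t (cos θ + sin θ)², t sin² θ)`, at `t = r²` and at `t = -r²`, and the
substitution `t = r²` turns `∫₀^∞ r (Φ_θ(r²) + Φ_θ(-r²)) dr` into `½ ∫_ℝ Φ_θ`.
At most one of `cos θ`, `cos θ + sin θ`, `sin θ` vanishes, so `Φ_θ` is the inverse of a polynomial
of degree at least two with all its zeros in the open lower half-plane; closing the contour in the
upper half-plane shows `∫_ℝ Φ_θ = 0`.
-/

open MeasureTheory Set Complex Finset Filter Topology Asymptotics Bornology
open scoped Interval

section UpperHalfPlane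

variable {E : Type*} [NormedAddCommGroup E] {G : ℂ → E}

theorem integrable_ofReal_of_isBigO_inv_sq (hc : ∀ x : ℝ, ContinuousAt G x)
    (hG : G =O[cobounded ℂ] fun z => z⁻¹ ^ 2) : Integrable fun x : ℝ => G x := by
  have hsq : (fun x : ℝ => (x : ℂ)⁻¹ ^ 2) =O[cobounded ℝ] fun x : ℝ => (1 + x ^ 2)⁻¹ := by
    refine IsBigO.of_bound 2 ?_
    filter_upwards [eventually_cobounded_le_norm 1] with x hx
    have hx2 : 1 ≤ x ^ 2 := by nlinarith [Real.norm_eq_abs x, sq_abs x, abs_nonneg x]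
    rw [norm_pow, norm_inv, norm_real, Real.norm_eq_abs, Real.norm_eq_abs, inv_pow, sq_abs,
      abs_of_pos (by positivity : (0 : ℝ) < (1 + x ^ 2)⁻¹), ← div_eq_mul_inv,
      le_div_iff₀ (by positivity), mul_add, mul_one, inv_mul_cancel₀ (by positivity)]
    linarith [inv_le_one_of_one_le₀ hx2]
  refine (continuous_iff_continuousAt.2 fun x => (hc x).comp continuous_ofReal.continuousAt)
    |>.locallyIntegrable.integrable_of_isBigO_cocompact ?_
    (integrable_inv_one_add_sq.integrableAtFilter _)
  rw [← Metric.cobounded_eq_cocompact]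
  exact (hG.comp_tendsto (RCLike.tendsto_ofReal_cobounded_cobounded ℂ)).trans hsq

theorem tendsto_intervalIntegral_of_isBigO_inv_sq [NormedSpace ℝ E]
    (hG : G =O[cobounded ℂ] fun z => z⁻¹ ^ 2) {a b : ℝ → ℝ} {γ : ℝ → ℝ → ℂ}
    (hab : ∀ R, |b R - a R| ≤ 2 * |R|) (hγ : ∀ R t, |R| ≤ ‖γ R t‖) :
    Tendsto (fun R => ∫ t in a R..b R, G (γ R t)) atTop (𝓝 0) := by
  obtain ⟨C, hC, hCG⟩ := hG.exists_pos
  obtain ⟨R₀, -, hR₀⟩ := hasBasis_cobounded_norm.eventually_iff.mp hCG.bound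
  have hlim : Tendsto (fun R : ℝ => 2 * C * R⁻¹) atTop (𝓝 0) := by
    simpa using tendsto_inv_atTop_zero.const_mul (2 * C)
  refine squeeze_zero_norm' ?_ hlim
  filter_upwards [eventually_ge_atTop R₀, eventually_gt_atTop 0] with R hR hR0
  have hbound : ∀ t ∈ Ι (a R) (b R), ‖G (γ R t)‖ ≤ C * R⁻¹ ^ 2 := by
    intro t _
    have hRγ : R ≤ ‖γ R t‖ := (le_abs_self R).trans (hγ R t)
    refine (hR₀ (hR.trans hRγ)).trans ?_
    rw [norm_pow, norm_inv]
    gcongr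
  calc ‖∫ t in a R..b R, G (γ R t)‖ ≤ C * R⁻¹ ^ 2 * |b R - a R| :=
        intervalIntegral.norm_integral_le_of_norm_le_const hbound
    _ ≤ C * R⁻¹ ^ 2 * (2 * R) := by
        gcongr; simpa [abs_of_pos hR0] using hab R
    _ = 2 * C * R⁻¹ := by field_simp

theorem integral_ofReal_eq_zero_of_differentiableAt_of_isBigO [NormedSpace ℂ E]
    [CompleteSpace E] (hd : ∀ z : ℂ, 0 ≤ z.im → DifferentiableAt ℂ G z)
    (hG : G =O[cobounded ℂ] fun z => z⁻¹ ^ 2) : ∫ x : ℝ, G x = 0 := by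
  have hrect : ∀ R : ℝ, 0 ≤ R → ∫ x in -R..R, G x = (∫ x in -R..R, G (x + R * I)) -
      I • (∫ y in 0..R, G (R + y * I)) + I • ∫ y in 0..R, G (-R + y * I) := by
    intro R hR
    have H := integral_boundary_rect_eq_zero_of_differentiableOn G ⟨-R, 0⟩ ⟨R, R⟩ fun z hz =>
      (hd z ((mem_uIcc.mp hz.2).elim (·.1) fun h => hR.trans h.1)).differentiableWithinAt
    simp only [ofReal_zero, ofReal_neg, zero_mul, add_zero] at H
    linear_combination (norm := module) H
  have hlim : Tendsto (fun R => ∫ x in -R..R, G x) atTop (𝓝 0) := by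
    have htop := tendsto_intervalIntegral_of_isBigO_inv_sq hG (a := fun R => -R) (b := id)
      (γ := fun R x => x + R * I) (fun R => by simp [← two_mul, abs_mul])
      (fun R x => by simpa using abs_im_le_norm (x + R * I))
    have hright := tendsto_intervalIntegral_of_isBigO_inv_sq hG (a := 0) (b := id)
      (γ := fun R y => R + y * I) (fun R => by simp; linarith [abs_nonneg R])
      (fun R y => by simpa using abs_re_le_norm (R + y * I))
    have hleft := tendsto_intervalIntegral_of_isBigO_inv_sq hG (a := 0) (b := id)
      (γ := fun R y => -R + y * I) (fun R => by simp; linarith [abs_nonneg R])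
      (fun R y => by simpa using abs_re_le_norm (-R + y * I))
    simpa using ((htop.sub (hright.const_smul I)).add (hleft.const_smul I)).congr'
      (eventually_ge_atTop 0 |>.mono fun R hR => (hrect R hR).symm)
  have hint := integrable_ofReal_of_isBigO_inv_sq (fun x => (hd x (by simp)).continuousAt) hG
  exact tendsto_nhds_unique
    (intervalIntegral_tendsto_integral hint tendsto_neg_atTop_atBot tendsto_id) hlim

end UpperHalfPlane

section LinearFactors

variable {κ : Type*}

theorem isBigO_inv_linear {α : ℂ} (hα : α ≠ 0) (β : ℂ) :
    (fun z : ℂ => (α * z + β)⁻¹) =O[cobounded ℂ] (·⁻¹) := by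
  have hequiv : (fun z : ℂ => α * z + β) ~[cobounded ℂ] fun z => α * z := by
    refine IsEquivalent.refl.add_isLittleO ((isLittleO_const_id_cobounded β).trans_isBigO ?_)
    exact isBigO_self_const_mul hα (fun z : ℂ => z) _
  have hmul : (fun z : ℂ => (α * z)⁻¹) =O[cobounded ℂ] (·⁻¹) := by
    simpa only [mul_inv] using isBigO_const_mul_self α⁻¹ (·⁻¹) _
  exact hequiv.inv.isBigO.trans hmul

theorem isBigO_inv_pow_inv_sq {n : ℕ} (hn : 2 ≤ n) :
    (fun z : ℂ => z⁻¹ ^ n) =O[cobounded ℂ] fun z => z⁻¹ ^ 2 := by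
  obtain ⟨k, rfl⟩ := Nat.exists_eq_add_of_le hn
  simpa only [pow_add, mul_one] using (isBigO_refl (fun z : ℂ => z⁻¹ ^ 2) _).mul
    ((tendsto_inv₀_cobounded.pow k).isBigO_one ℂ)

theorem isBigO_inv_prod_linear (s : Finset κ) (α β : κ → ℂ) :
    (fun z : ℂ => (∏ i ∈ s, (α i * z + β i))⁻¹) =O[cobounded ℂ]
      fun z => z⁻¹ ^ #{i ∈ s | α i ≠ 0} := by
  have hfactor : ∀ i ∈ s, (fun z : ℂ => (α i * z + β i)⁻¹) =O[cobounded ℂ]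
      fun z => if α i ≠ 0 then z⁻¹ else 1 := by
    intro i _
    by_cases hα : α i = 0
    · simpa [hα] using isBigO_const_const (β i)⁻¹ (one_ne_zero : (1 : ℂ) ≠ 0) (cobounded ℂ)
    · simpa [hα] using isBigO_inv_linear hα (β i)
  simpa [prod_inv_distrib, prod_ite, prod_const] using IsBigO.finsetProd hfactor

variable {s : Finset κ}

theorem isBigO_inv_prod_linear_inv_sq {α β : κ → ℂ} (hs : 2 ≤ #{i ∈ s | α i ≠ 0}) :
    (fun z : ℂ => (∏ i ∈ s, (α i * z + β i))⁻¹) =O[cobounded ℂ] fun z => z⁻¹ ^ 2 :=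
  (isBigO_inv_prod_linear s α β).trans (isBigO_inv_pow_inv_sq hs)

theorem linear_ne_zero_of_im_nonneg {α : ℝ} {β z : ℂ} (hα : 0 ≤ α) (hβ : 0 < β.im)
    (hz : 0 ≤ z.im) : (α : ℂ) * z + β ≠ 0 := fun h => by
  have := congrArg im h
  simp only [add_im, im_ofReal_mul, zero_im] at this
  nlinarith

variable {α : κ → ℝ} {β : κ → ℂ}

theorem differentiableAt_inv_prod_linear (hα : ∀ i ∈ s, 0 ≤ α i)
    (hβ : ∀ i ∈ s, 0 < (β i).im) {z : ℂ} (hz : 0 ≤ z.im) :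
    DifferentiableAt ℂ (fun w => (∏ i ∈ s, ((α i : ℂ) * w + β i))⁻¹) z :=
  (DifferentiableAt.fun_finsetProd fun _ _ => by fun_prop).inv
    (prod_ne_zero_iff.2 fun i hi => linear_ne_zero_of_im_nonneg (hα i hi) (hβ i hi) hz)

theorem integrable_inv_prod_linear (hα : ∀ i ∈ s, 0 ≤ α i) (hβ : ∀ i ∈ s, 0 < (β i).im)
    (hs : 2 ≤ #{i ∈ s | α i ≠ 0}) :
    Integrable fun t : ℝ => (∏ i ∈ s, ((α i : ℂ) * t + β i))⁻¹ :=
  integrable_ofReal_of_isBigO_inv_sq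
    (fun _ => (differentiableAt_inv_prod_linear hα hβ (by simp)).continuousAt)
    (isBigO_inv_prod_linear_inv_sq (by simpa using hs))

theorem integral_inv_prod_linear_eq_zero (hα : ∀ i ∈ s, 0 ≤ α i)
    (hβ : ∀ i ∈ s, 0 < (β i).im) (hs : 2 ≤ #{i ∈ s | α i ≠ 0}) :
    ∫ t : ℝ, (∏ i ∈ s, ((α i : ℂ) * t + β i))⁻¹ = 0 :=
  integral_ofReal_eq_zero_of_differentiableAt_of_isBigO
    (fun _ hz => differentiableAt_inv_prod_linear hα hβ hz)
    (isBigO_inv_prod_linear_inv_sq (by simpa using hs))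

end LinearFactors

section Radial

variable {E : Type*} [NormedAddCommGroup E] [NormedSpace ℝ E]

theorem integral_Ioi_smul_comp_sq (F : ℝ → E) :
    ∫ r in Ioi (0 : ℝ), r • F (r ^ 2) = (2 : ℝ)⁻¹ • ∫ t in Ioi (0 : ℝ), F t := by
  rw [← integral_comp_rpow_Ioi F two_ne_zero, ← integral_smul]
  norm_num [smul_smul, ← mul_assoc]

theorem integrableOn_Ioi_smul_comp_sq {F : ℝ → E} (hF : IntegrableOn F (Ioi 0)) :
    IntegrableOn (fun r : ℝ => r • F (r ^ 2)) (Ioi 0) := by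
  have h : IntegrableOn (fun r : ℝ => (2 : ℝ)⁻¹ • ((|2| * r ^ ((2 : ℝ) - 1)) • F (r ^ (2 : ℝ))))
      (Ioi 0) := ((integrableOn_Ioi_comp_rpow_iff F two_ne_zero).2 hF).smul _
  refine h.congr_fun (fun r _ => ?_) measurableSet_Ioi
  norm_num [smul_smul, ← mul_assoc]

theorem integral_Ioi_smul_comp_sq_add_comp_neg_sq {F : ℝ → E} (hF : Integrable F) :
    ∫ r in Ioi (0 : ℝ), r • (F (r ^ 2) + F (-r ^ 2)) = (2 : ℝ)⁻¹ • ∫ t, F t := by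
  have hneg : Integrable fun t => F (-t) := hF.comp_neg
  simp_rw [smul_add]
  rw [integral_add (integrableOn_Ioi_smul_comp_sq hF.integrableOn)
      (integrableOn_Ioi_smul_comp_sq (F := fun t => F (-t)) hneg.integrableOn),
    integral_Ioi_smul_comp_sq, integral_Ioi_smul_comp_sq (fun t => F (-t)), ← smul_add,
    integral_comp_neg_Ioi, neg_zero, add_comm,
    intervalIntegral.integral_Iic_add_Ioi hF.integrableOn hF.integrableOn]

theorem integrableOn_polarCoord_target_smul {g : ℝ × ℝ → E} (hg : Integrable g) :
    IntegrableOn (fun p : ℝ × ℝ => p.1 • g (polarCoord.symm p)) polarCoord.target := by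
  have h := (integrableOn_image_iff_integrableOn_abs_det_fderiv_smul volume
    polarCoord.open_target.measurableSet
    (fun p _ => (hasFDerivAt_polarCoord_symm p).hasFDerivWithinAt) polarCoord.symm.injOn g).1
  rw [polarCoord.symm_image_target_eq_source] at h
  refine (h hg.integrableOn).congr_fun (fun p hp => ?_) polarCoord.open_target.measurableSet
  simp only [det_fderivPolarCoordSymm, abs_of_pos (mem_Ioi.mp hp.1)]

theorem integral_eq_integral_Ioo_integral_Ioi_polar {g : ℝ × ℝ → E} (hg : Integrable g) :
    ∫ p, g p = ∫ θ in Ioo (-Real.pi) Real.pi, ∫ r in Ioi (0 : ℝ),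
      r • g (r * Real.cos θ, r * Real.sin θ) := by
  have hint := integrableOn_polarCoord_target_smul hg
  rw [← integral_comp_polarCoord_symm, polarCoord_target, Measure.volume_eq_prod,
    ← Measure.prod_restrict] at *
  rw [IntegrableOn, ← Measure.prod_restrict] at hint
  exact integral_prod_symm _ hint

end Radial

section Propagators

variable {ι₁ ι₂ ι₃ : Type*} [Fintype ι₁] [Fintype ι₂] [Fintype ι₃]

noncomputable def invPropagators (a : ι₁ → ℝ) (b : ι₂ → ℝ) (c : ι₃ → ℝ) (η : ℝ)
    (x y z : ℂ) : ℂ :=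
  ((∏ i, (x + a i + η * I)) * (∏ j, (y + b j + η * I)) * (∏ k, (z + c k + η * I)))⁻¹

theorem integrable_and_integral_invPropagators_ray_eq_zero [Nonempty ι₁] [Nonempty ι₂]
    [Nonempty ι₃] (a : ι₁ → ℝ) (b : ι₂ → ℝ) (c : ι₃ → ℝ) {η : ℝ} (hη : 0 < η) {x y : ℝ}
    (hxy : (x, y) ≠ 0) :
    (Integrable fun t : ℝ => invPropagators a b c η (x ^ 2 * t) ((x + y) ^ 2 * t) (y ^ 2 * t)) ∧
      ∫ t : ℝ, invPropagators a b c η (x ^ 2 * t) ((x + y) ^ 2 * t) (y ^ 2 * t) = 0 := by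
  let α : ι₁ ⊕ ι₂ ⊕ ι₃ → ℝ :=
    Sum.elim (fun _ => x ^ 2) (Sum.elim (fun _ => (x + y) ^ 2) fun _ => y ^ 2)
  let β : ι₁ ⊕ ι₂ ⊕ ι₃ → ℂ :=
    Sum.elim (fun i => a i + η * I) (Sum.elim (fun j => b j + η * I) fun k => c k + η * I)
  have hΦ : (fun t : ℝ => invPropagators a b c η (x ^ 2 * t) ((x + y) ^ 2 * t) (y ^ 2 * t)) =
      fun t : ℝ => (∏ i, ((α i : ℂ) * t + β i))⁻¹ := by
    ext t
    simp [α, β, invPropagators, Fintype.prod_sum_type, add_assoc, mul_assoc]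
  have hα : ∀ i ∈ Finset.univ, 0 ≤ α i := by
    rintro (i | j | k) - <;> simp only [α, Sum.elim_inl, Sum.elim_inr] <;> positivity
  have hβ : ∀ i ∈ Finset.univ, 0 < (β i).im := by rintro (i | j | k) - <;> simpa [β]
  -- at most one of `x`, `x + y`, `y` vanishes
  have htwo : 2 ≤ #{i | α i ≠ 0} := by
    obtain ⟨i, j, hij, hi, hj⟩ : ∃ i j, i ≠ j ∧ α i ≠ 0 ∧ α j ≠ 0 := by
      by_cases hx : x = 0
      · have hy : y ≠ 0 := by rintro rfl; exact hxy (by simp [hx])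
        exact ⟨.inr (.inl (Classical.arbitrary _)), .inr (.inr (Classical.arbitrary _)), by simp,
          by simp [α, hx, hy], by simp [α, hy]⟩
      by_cases hy : y = 0
      · exact ⟨.inl (Classical.arbitrary _), .inr (.inl (Classical.arbitrary _)), by simp,
          by simp [α, hx], by simp [α, hx, hy]⟩
      · exact ⟨.inl (Classical.arbitrary _), .inr (.inr (Classical.arbitrary _)), by simp,
          by simp [α, hx], by simp [α, hy]⟩
    exact one_lt_card.2 ⟨i, by simpa using hi, j, by simpa using hj, hij⟩
  rw [hΦ]
  exact ⟨integrable_inv_prod_linear hα hβ htwo, integral_inv_prod_linear_eq_zero hα hβ htwo⟩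

end Propagators

theorem metric_flip_identity_general
    (A B C : ℕ) (hA : 1 ≤ A) (hB : 1 ≤ B) (hC : 1 ≤ C)
    (a : Fin A → ℝ) (b : Fin B → ℝ) (c : Fin C → ℝ) (η : ℝ) (hη : 0 < η)
    (f : ℂ → ℂ → ℂ → ℂ)
    (hf : ∀ x y z : ℂ, f x y z =
      ((∏ i, (x + a i + η * I)) * (∏ j, (y + b j + η * I)) *
        (∏ k, (z + c k + η * I)))⁻¹)
    (h₁ : Integrable fun p : ℝ × ℝ =>
      f ((p.1 : ℂ) ^ 2) (((p.1 : ℂ) + p.2) ^ 2) ((p.2 : ℂ) ^ 2))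
    (h₂ : Integrable fun p : ℝ × ℝ =>
      f (-(p.1 : ℂ) ^ 2) (-((p.1 : ℂ) + p.2) ^ 2) (-(p.2 : ℂ) ^ 2)) :
    ∫ p : ℝ × ℝ, f ((p.1 : ℂ) ^ 2) (((p.1 : ℂ) + p.2) ^ 2) ((p.2 : ℂ) ^ 2)
      = -∫ p : ℝ × ℝ,
          f (-(p.1 : ℂ) ^ 2) (-((p.1 : ℂ) + p.2) ^ 2) (-(p.2 : ℂ) ^ 2) := by
  obtain rfl : f = invPropagators a b c η := funext fun x => funext fun y => funext (hf x y)
  have : Nonempty (Fin A) := ⟨⟨0, hA⟩⟩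
  have : Nonempty (Fin B) := ⟨⟨0, hB⟩⟩
  have : Nonempty (Fin C) := ⟨⟨0, hC⟩⟩
  rw [← sub_eq_zero, sub_neg_eq_add, ← integral_add h₁ h₂,
    integral_eq_integral_Ioo_integral_Ioi_polar (h₁.fun_add h₂)]
  refine integral_eq_zero_of_ae (.of_forall fun θ => ?_)
  have hdir : (Real.cos θ, Real.sin θ) ≠ 0 := fun h => by
    have := Real.sin_sq_add_cos_sq θ
    rw [(Prod.mk_eq_zero.mp h).1, (Prod.mk_eq_zero.mp h).2] at this
    norm_num at this
  obtain ⟨hint, hzero⟩ := integrable_and_integral_invPropagators_ray_eq_zero a b c hη hdir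
  set Φ := fun t : ℝ => invPropagators a b c η ((Real.cos θ : ℂ) ^ 2 * t)
    (((Real.cos θ : ℂ) + Real.sin θ) ^ 2 * t) ((Real.sin θ : ℂ) ^ 2 * t)
  calc _ = ∫ r in Ioi (0 : ℝ), r • (Φ (r ^ 2) + Φ (-r ^ 2)) := by
        congr! 4 <;> simp only [Φ] <;> push_cast <;> ring_nf
    _ = 0 := by rw [integral_Ioi_smul_comp_sq_add_comp_neg_sq hint, hzero, smul_zero]

/-- The orthogonal-space metric flip: for a product of inverse propagators
`f(x,y,z) = 1/(∏ᵢ (x + aᵢ + iη) · ∏ⱼ (y + bⱼ + iη) · ∏ₖ (z + cₖ + iη))`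
with `η > 0`, real constants and sufficiently fast decay (at least five
propagators in total, at least one in each argument),
`∬ f(l₃², (l₃+k₃)², k₃²) dl₃ dk₃ = -∬ f(-l₃², -(l₃+k₃)², -k₃²) dl₃ dk₃`. -/
theorem metric_flip_identity
    (A B C : ℕ) (hA : 1 ≤ A) (hB : 1 ≤ B) (hC : 1 ≤ C) (hABC : 5 ≤ A + B + C)
    (a : Fin A → ℝ) (b : Fin B → ℝ) (c : Fin C → ℝ) (η : ℝ) (hη : 0 < η)
    (f : ℂ → ℂ → ℂ → ℂ)
    (hf : ∀ x y z : ℂ, f x y z =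
      ((∏ i, (x + a i + η * I)) * (∏ j, (y + b j + η * I)) *
        (∏ k, (z + c k + η * I)))⁻¹)
    (h₁ : Integrable fun p : ℝ × ℝ =>
      f ((p.1 : ℂ) ^ 2) (((p.1 : ℂ) + p.2) ^ 2) ((p.2 : ℂ) ^ 2))
    (h₂ : Integrable fun p : ℝ × ℝ =>
      f (-(p.1 : ℂ) ^ 2) (-((p.1 : ℂ) + p.2) ^ 2) (-(p.2 : ℂ) ^ 2)) :
    ∫ p : ℝ × ℝ, f ((p.1 : ℂ) ^ 2) (((p.1 : ℂ) + p.2) ^ 2) ((p.2 : ℂ) ^ 2)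
      = -∫ p : ℝ × ℝ,
          f (-(p.1 : ℂ) ^ 2) (-((p.1 : ℂ) + p.2) ^ 2) (-(p.2 : ℂ) ^ 2) :=
  metric_flip_identity_general A B C hA hB hC a b c η hη f hf h₁ h₂
end
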